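/- Let C(u,t) be a smooth family of immersed closed curves, E(t) := ∫ |D_s² C|² ds the elastic energy, L(t) the length, and N(t) := (∫ |D_s² ∂_t C|² ds)^{1/2}. Then |E'(t)| ≤ 2√(E(t)) N(t) + 3 E(t) √(L(t)) N(t). -/

import Mathlib

open Real
open scoped RealInnerProductSpace

/-- Partial derivative in the curve parameter `u`. -/
noncomputable def Du (n : ℕ) (G : ℝ → ℝ → EuclideanSpace ℝ (Fin n)) (u t : ℝ) :
    EuclideanSpace ℝ (Fin n) :=
  deriv (fun u' => G u' t) u

/-- Partial derivative in the time parameter `t`. -/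
noncomputable def Dt (n : ℕ) (G : ℝ → ℝ → EuclideanSpace ℝ (Fin n)) (u t : ℝ) :
    EuclideanSpace ℝ (Fin n) :=
  deriv (fun t' => G u t') t

/-- Arclength derivative `D_s = |∂ᵤC|⁻¹ ∂ᵤ` along the family of curves `C`. -/
noncomputable def Ds (n : ℕ) (C G : ℝ → ℝ → EuclideanSpace ℝ (Fin n)) (u t : ℝ) :
    EuclideanSpace ℝ (Fin n) :=
  ‖Du n C u t‖⁻¹ • Du n G u t

/-- Elastic energy `E(t) = ∫ |D_s² C|² ds`. -/
noncomputable def elasticE (n : ℕ) (C : ℝ → ℝ → EuclideanSpace ℝ (Fin n)) (t : ℝ) : ℝ :=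
  ∫ u in (0:ℝ)..(2 * π), ‖Ds n C (Ds n C C) u t‖ ^ 2 * ‖Du n C u t‖

/-- Length `L(t)` of the curve `C(·,t)`. -/
noncomputable def clen (n : ℕ) (C : ℝ → ℝ → EuclideanSpace ℝ (Fin n)) (t : ℝ) : ℝ :=
  ∫ u in (0:ℝ)..(2 * π), ‖Du n C u t‖

/-- `N(t) = (∫ |D_s² ∂ₜC|² ds)^{1/2}`. -/
noncomputable def NN (n : ℕ) (C : ℝ → ℝ → EuclideanSpace ℝ (Fin n)) (t : ℝ) : ℝ :=
  Real.sqrt (∫ u in (0:ℝ)..(2 * π), ‖Ds n C (Ds n C (Dt n C)) u t‖ ^ 2 * ‖Du n C u t‖)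

/-!
Write `v = |∂ᵤC|`, `T = D_s C`, `κ = D_s² C` and `φ = ⟨D_s ∂ₜC, T⟩`. The commutator
`∂ₜ D_s = D_s ∂ₜ - φ D_s` gives `∂ₜ v = φ v` and `∂ₜ κ = D_s² ∂ₜC - c T - 2 φ κ`, so, as `κ ⊥ T`,
differentiating under the integral sign yields `E' = ∫ (2 ⟨κ, D_s² ∂ₜC⟩ - 3 φ |κ|²) ds`.
The first term is at most `2 √E N` by Cauchy–Schwarz. For the second, `∫ D_s ∂ₜC ds = ∫ ∂ᵤ∂ₜC du`
vanishes by periodicity, so `|φ| ≤ |D_s ∂ₜC| ≤ ∫ |D_s² ∂ₜC| ds ≤ √L N`.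
-/

open Set

section Calculus

variable {F : Type*} [NormedAddCommGroup F] [InnerProductSpace ℝ F]

theorem HasDerivAt.norm_of_ne_zero {f : ℝ → F} {f' : F} {x : ℝ} (hf : HasDerivAt f f' x)
    (h0 : f x ≠ 0) : HasDerivAt (fun y => ‖f y‖) (⟪f x, f'⟫ / ‖f x‖) x := by
  have h := hf.norm_sq.sqrt (pow_ne_zero 2 (norm_ne_zero_iff.2 h0))
  simp only [Real.sqrt_sq (norm_nonneg _)] at h
  convert h using 1
  field_simp

theorem HasDerivAt.inner_self_eq_zero_of_norm_eq {f : ℝ → F} {f' : F} {x c : ℝ}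
    (hf : HasDerivAt f f' x) (hc : ∀ y, ‖f y‖ = c) : ⟪f', f x⟫ = 0 := by
  have h := hf.norm_sq
  simp only [hc] at h
  have := h.unique (hasDerivAt_const x (c ^ 2))
  rw [real_inner_comm]
  linarith

end Calculus

namespace intervalIntegral

theorem integral_mul_mul_le_sqrt_mul_sqrt {a b : ℝ} (hab : a ≤ b) {f g w : ℝ → ℝ}
    (hf : Continuous f) (hg : Continuous g) (hw : Continuous w) (hw0 : ∀ x, 0 ≤ w x) :
    ∫ x in a..b, f x * g x * w x ≤
      √(∫ x in a..b, f x ^ 2 * w x) * √(∫ x in a..b, g x ^ 2 * w x) := by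
  set A := ∫ x in a..b, f x ^ 2 * w x
  set B := ∫ x in a..b, f x * g x * w x
  set D := ∫ x in a..b, g x ^ 2 * w x
  have hA : 0 ≤ A := integral_nonneg hab fun x _ => mul_nonneg (sq_nonneg _) (hw0 x)
  have hquad : ∀ s : ℝ, 0 ≤ D * (s * s) + 2 * B * s + A := by
    intro s
    have hexp : ∫ x in a..b, (f x + s * g x) ^ 2 * w x = D * (s * s) + 2 * B * s + A := by
      have hint : ∀ h : ℝ → ℝ, Continuous h → IntervalIntegrable h MeasureTheory.volume a b :=
        fun h hh => hh.intervalIntegrable a b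
      rw [integral_congr (g := fun x => f x ^ 2 * w x + (2 * s) * (f x * g x * w x) +
          (s * s) * (g x ^ 2 * w x)) fun x _ => by ring,
        integral_add (hint _ (by fun_prop)) (hint _ (by fun_prop)),
        integral_add (hint _ (by fun_prop)) (hint _ (by fun_prop)),
        integral_const_mul, integral_const_mul]
      ring
    rw [← hexp]
    exact integral_nonneg hab fun x _ => mul_nonneg (sq_nonneg _) (hw0 x)
  have hB : B ^ 2 ≤ A * D := by
    have := discrim_le_zero hquad
    rw [discrim] at this
    linarith
  rw [← Real.sqrt_mul hA]
  exact Real.le_sqrt_of_sq_le hB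

variable {E : Type*} [NormedAddCommGroup E] [NormedSpace ℝ E] {a b : ℝ}

theorem norm_sub_le_integral_norm_deriv [CompleteSpace E] {f f' : ℝ → E}
    (hf : ∀ x, HasDerivAt f (f' x) x) (hf' : Continuous f') {x y : ℝ} (hx : x ∈ Icc a b)
    (hy : y ∈ Icc a b) :
    ‖f y - f x‖ ≤ ∫ z in a..b, ‖f' z‖ := by
  rw [← integral_eq_sub_of_hasDerivAt (fun z _ => hf z) (hf'.intervalIntegrable x y)]
  refine norm_integral_le_abs_integral_norm.trans ?_
  refine (abs_integral_mono_interval ?_ (Filter.Eventually.of_forall fun _ => norm_nonneg _)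
    (hf'.norm.intervalIntegrable a b)).trans_eq (abs_of_nonneg ?_)
  · exact uIoc_subset_uIoc_of_uIcc_subset_uIcc ((uIcc_subset_Icc hx hy).trans Icc_subset_uIcc)
  · exact integral_nonneg (hx.1.trans hx.2) fun _ _ => norm_nonneg _

theorem norm_le_integral_norm_deriv_of_integral_smul_eq_zero [CompleteSpace E]
    {f f' : ℝ → E} {w : ℝ → ℝ} (hf : ∀ x, HasDerivAt f (f' x) x) (hf' : Continuous f')
    (hw : Continuous w)
    (hw0 : ∀ x, 0 ≤ w x) (hpos : 0 < ∫ x in a..b, w x) (hmean : ∫ x in a..b, w x • f x = 0)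
    {u : ℝ} (hu : u ∈ Icc a b) : ‖f u‖ ≤ ∫ z in a..b, ‖f' z‖ := by
  have hab : a ≤ b := hu.1.trans hu.2
  have hfc : Continuous f := continuous_iff_continuousAt.2 fun x => (hf x).continuousAt
  set K := ∫ z in a..b, ‖f' z‖
  have hsplit : (∫ x in a..b, w x) • f u = ∫ x in a..b, w x • (f u - f x) := by
    simp only [smul_sub]
    rw [integral_sub (f := fun x => w x • f u) (g := fun x => w x • f x)
      ((hw.smul continuous_const).intervalIntegrable a b) ((hw.smul hfc).intervalIntegrable a b),
      hmean, sub_zero, integral_smul_const]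
  refine le_of_mul_le_mul_left ?_ hpos
  calc (∫ x in a..b, w x) * ‖f u‖ = ‖∫ x in a..b, w x • (f u - f x)‖ := by
        rw [← hsplit, norm_smul, Real.norm_of_nonneg hpos.le]
    _ ≤ ∫ x in a..b, w x * K := by
        refine (norm_integral_le_integral_norm hab).trans (integral_mono_on hab
          ((hw.smul (continuous_const.sub hfc)).norm.intervalIntegrable a b)
          ((hw.mul continuous_const).intervalIntegrable a b) fun x hx => ?_)
        rw [norm_smul, Real.norm_of_nonneg (hw0 x)]
        exact mul_le_mul_of_nonneg_left (norm_sub_le_integral_norm_deriv hf hf' hx hu) (hw0 x)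
    _ = (∫ x in a..b, w x) * K := integral_mul_const K w

theorem hasDerivAt_integral_of_continuous_deriv {F F' : ℝ → ℝ → E} (hF : ∀ t, Continuous (F t))
    (hF' : Continuous (Function.uncurry F')) (hderiv : ∀ t x, HasDerivAt (F · x) (F' t x) t)
    (t₀ : ℝ) : HasDerivAt (fun t => ∫ x in a..b, F t x) (∫ x in a..b, F' t₀ x) t₀ := by
  obtain ⟨M, hM⟩ := ((isCompact_closedBall t₀ 1).prod (isCompact_uIcc (a := a) (b := b))
    ).exists_bound_of_continuousOn hF'.continuousOn
  refine (hasDerivAt_integral_of_dominated_loc_of_deriv_le (bound := fun _ => M)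
    (Metric.ball_mem_nhds t₀ one_pos) (Filter.Eventually.of_forall fun t => ?_)
    ((hF t₀).intervalIntegrable a b) ?_ ?_ intervalIntegrable_const
    (Filter.Eventually.of_forall fun x _ t _ => hderiv t x)).2
  · exact (hF t).aestronglyMeasurable
  · exact (hF'.comp (Continuous.prodMk_right t₀)).aestronglyMeasurable
  · refine Filter.Eventually.of_forall fun x hx t ht => hM (t, x) ⟨?_, ?_⟩
    · exact Metric.ball_subset_closedBall ht
    · exact uIoc_subset_uIcc hx

end intervalIntegral

abbrev SmoothFamily {n : ℕ} (G : ℝ → ℝ → EuclideanSpace ℝ (Fin n)) : Prop :=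
  ContDiff ℝ (⊤ : ℕ∞) fun p : ℝ × ℝ => G p.1 p.2

section Partials

variable {n : ℕ} {G : ℝ → ℝ → EuclideanSpace ℝ (Fin n)}

theorem SmoothFamily.differentiable (hG : SmoothFamily G) :
    Differentiable ℝ fun p : ℝ × ℝ => G p.1 p.2 :=
  ContDiff.differentiable hG (by simp)

theorem SmoothFamily.continuous_left (hG : SmoothFamily G) (t : ℝ) : Continuous fun u => G u t :=
  hG.continuous.comp (continuous_id.prodMk continuous_const)

theorem Du_eq_fderiv (hG : SmoothFamily G) (u t : ℝ) :
    Du n G u t = fderiv ℝ (fun p : ℝ × ℝ => G p.1 p.2) (u, t) (1, 0) :=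
  (((hG.differentiable (u, t)).hasFDerivAt.comp_hasDerivAt u
    ((hasDerivAt_id u).prodMk (hasDerivAt_const u t))).deriv :)

theorem Dt_eq_fderiv (hG : SmoothFamily G) (u t : ℝ) :
    Dt n G u t = fderiv ℝ (fun p : ℝ × ℝ => G p.1 p.2) (u, t) (0, 1) :=
  (((hG.differentiable (u, t)).hasFDerivAt.comp_hasDerivAt t
    ((hasDerivAt_const t u).prodMk (hasDerivAt_id t))).deriv :)

theorem hasDerivAt_Du (hG : SmoothFamily G) (u t : ℝ) :
    HasDerivAt (fun u' => G u' t) (Du n G u t) u :=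
  ((hG.differentiable.comp (differentiable_id.prodMk (differentiable_const t))) u).hasDerivAt

theorem hasDerivAt_Dt (hG : SmoothFamily G) (u t : ℝ) :
    HasDerivAt (fun t' => G u t') (Dt n G u t) t :=
  ((hG.differentiable.comp ((differentiable_const u).prodMk differentiable_id)) t).hasDerivAt

theorem smoothFamily_Du (hG : SmoothFamily G) : SmoothFamily (Du n G) := by
  simp only [SmoothFamily, Du_eq_fderiv hG]
  exact (hG.fderiv_right (mod_cast le_top)).clm_apply contDiff_const

theorem smoothFamily_Dt (hG : SmoothFamily G) : SmoothFamily (Dt n G) := by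
  simp only [SmoothFamily, Dt_eq_fderiv hG]
  exact (hG.fderiv_right (mod_cast le_top)).clm_apply contDiff_const

theorem Dt_Du (hG : SmoothFamily G) (u t : ℝ) : Dt n (Du n G) u t = Du n (Dt n G) u t := by
  have hD := (hG.fderiv_right (m := 1) (WithTop.coe_le_coe.2 le_top)).differentiable one_ne_zero
  have hsymm := hG.contDiffAt (x := (u, t)).isSymmSndFDerivAt
    (by simpa using WithTop.coe_le_coe.2 (le_top : (2 : ℕ∞) ≤ ⊤))
  rw [Dt_eq_fderiv (smoothFamily_Du hG), Du_eq_fderiv (smoothFamily_Dt hG)]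
  simp only [Du_eq_fderiv hG, Dt_eq_fderiv hG]
  simpa [fderiv_clm_apply (hD _) (differentiableAt_const _)] using hsymm (0, 1) (1, 0)

end Partials

section Arclength

variable {n : ℕ} {C : ℝ → ℝ → EuclideanSpace ℝ (Fin n)}

theorem Du_eq_norm_smul_Ds (himm : ∀ u t, Du n C u t ≠ 0)
    (G : ℝ → ℝ → EuclideanSpace ℝ (Fin n)) (u t : ℝ) :
    Du n G u t = ‖Du n C u t‖ • Ds n C G u t := by
  rw [Ds, smul_smul, mul_inv_cancel₀ (norm_ne_zero_iff.2 (himm u t)), one_smul]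

theorem norm_Ds_self (himm : ∀ u t, Du n C u t ≠ 0) (u t : ℝ) : ‖Ds n C C u t‖ = 1 := by
  rw [Ds, norm_smul, norm_inv, norm_norm, inv_mul_cancel₀ (norm_ne_zero_iff.2 (himm u t))]

theorem smoothFamily_Ds (hC : SmoothFamily C) (himm : ∀ u t, Du n C u t ≠ 0)
    {G : ℝ → ℝ → EuclideanSpace ℝ (Fin n)} (hG : SmoothFamily G) : SmoothFamily (Ds n C G) :=
  (((smoothFamily_Du hC).norm ℝ fun p => himm p.1 p.2).inv
    fun p => norm_ne_zero_iff.2 (himm p.1 p.2)).smul (smoothFamily_Du hG)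

theorem hasDerivAt_norm_Du (hC : SmoothFamily C) (himm : ∀ u t, Du n C u t ≠ 0) (u t : ℝ) :
    HasDerivAt (fun t' => ‖Du n C u t'‖)
      (⟪Ds n C (Dt n C) u t, Ds n C C u t⟫ * ‖Du n C u t‖) t := by
  have h := (hasDerivAt_Dt (smoothFamily_Du hC) u t).norm_of_ne_zero (himm u t)
  rw [Dt_Du hC, Du_eq_norm_smul_Ds himm (Dt n C), Du_eq_norm_smul_Ds himm C, real_inner_smul_left,
    real_inner_smul_right, norm_smul, norm_norm, norm_Ds_self himm, mul_one, real_inner_comm] at h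
  convert h using 1
  field_simp [norm_ne_zero_iff.2 (himm u t)]

/-- The commutator `[∂ₜ, D_s] = -⟨D_s ∂ₜC, T⟩ D_s`. -/
theorem hasDerivAt_Ds (hC : SmoothFamily C) (himm : ∀ u t, Du n C u t ≠ 0)
    {G : ℝ → ℝ → EuclideanSpace ℝ (Fin n)} (hG : SmoothFamily G) (u t : ℝ) :
    HasDerivAt (fun t' => Ds n C G u t')
      (Ds n C (Dt n G) u t - ⟪Ds n C (Dt n C) u t, Ds n C C u t⟫ • Ds n C G u t) t := by
  have hv := norm_ne_zero_iff.2 (himm u t)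
  have h : HasDerivAt (fun t' => Ds n C G u t') _ t :=
    ((hasDerivAt_norm_Du hC himm u t).inv hv).smul (hasDerivAt_Dt (smoothFamily_Du hG) u t)
  refine h.congr_deriv ?_
  rw [Dt_Du hG]
  simp only [Ds, Pi.inv_apply]
  match_scalars <;> field_simp

theorem inner_Ds_Ds_self_Ds_self (hC : SmoothFamily C) (himm : ∀ u t, Du n C u t ≠ 0)
    (u t : ℝ) : ⟪Ds n C (Ds n C C) u t, Ds n C C u t⟫ = 0 := by
  rw [Ds, real_inner_smul_left]
  exact mul_eq_zero_of_right _ <|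
    (hasDerivAt_Du (smoothFamily_Ds hC himm hC) u t).inner_self_eq_zero_of_norm_eq
      (norm_Ds_self himm · t)

theorem exists_hasDerivAt_Ds_Ds_self (hC : SmoothFamily C) (himm : ∀ u t, Du n C u t ≠ 0)
    (u t : ℝ) : ∃ c : ℝ, HasDerivAt (fun t' => Ds n C (Ds n C C) u t')
      (Ds n C (Ds n C (Dt n C)) u t - c • Ds n C C u t -
        (2 * ⟪Ds n C (Dt n C) u t, Ds n C C u t⟫) • Ds n C (Ds n C C) u t) t := by
  have hT := smoothFamily_Ds hC himm hC
  have hW := smoothFamily_Ds hC himm (smoothFamily_Dt hC)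
  obtain ⟨dφ, hφ⟩ : ∃ dφ, HasDerivAt (fun u' => ⟪Ds n C (Dt n C) u' t, Ds n C C u' t⟫) dφ u :=
    ⟨_, (hasDerivAt_Du hW u t).inner ℝ (hasDerivAt_Du hT u t)⟩
  have hDtT : Dt n (Ds n C C) = fun u' t' =>
      Ds n C (Dt n C) u' t' - ⟪Ds n C (Dt n C) u' t', Ds n C C u' t'⟫ • Ds n C C u' t' :=
    funext₂ fun u' t' => (hasDerivAt_Ds hC himm hC u' t').deriv
  have hDuDtT : Du n (Dt n (Ds n C C)) u t = Du n (Ds n C (Dt n C)) u t -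
      (⟪Ds n C (Dt n C) u t, Ds n C C u t⟫ • Du n (Ds n C C) u t + dφ • Ds n C C u t) := by
    rw [hDtT]
    exact ((hasDerivAt_Du hW u t).sub (hφ.smul (hasDerivAt_Du hT u t))).deriv
  refine ⟨‖Du n C u t‖⁻¹ * dφ, (hasDerivAt_Ds hC himm hT u t).congr_deriv ?_⟩
  rw [show Ds n C (Dt n (Ds n C C)) u t = ‖Du n C u t‖⁻¹ • Du n (Dt n (Ds n C C)) u t from rfl,
    hDuDtT]
  simp only [Ds]
  match_scalars <;> ring

theorem hasDerivAt_elastic_density (hC : SmoothFamily C) (himm : ∀ u t, Du n C u t ≠ 0)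
    (u t : ℝ) : HasDerivAt (fun t' => ‖Ds n C (Ds n C C) u t'‖ ^ 2 * ‖Du n C u t'‖)
      (2 * ⟪Ds n C (Ds n C C) u t, Ds n C (Ds n C (Dt n C)) u t⟫ * ‖Du n C u t‖ -
        3 * ⟪Ds n C (Dt n C) u t, Ds n C C u t⟫ *
          (‖Ds n C (Ds n C C) u t‖ ^ 2 * ‖Du n C u t‖)) t := by
  obtain ⟨c, hκ⟩ := exists_hasDerivAt_Ds_Ds_self hC himm u t
  refine (hκ.norm_sq.mul (hasDerivAt_norm_Du hC himm u t)).congr_deriv ?_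
  rw [inner_sub_right, inner_sub_right, real_inner_smul_right, real_inner_smul_right,
    inner_Ds_Ds_self_Ds_self hC himm u t, real_inner_self_eq_norm_sq]
  ring

end Arclength

section ClosedCurve

variable {n : ℕ} {C : ℝ → ℝ → EuclideanSpace ℝ (Fin n)}

theorem hasDerivAt_elasticE (hC : SmoothFamily C) (himm : ∀ u t, Du n C u t ≠ 0) (t : ℝ) :
    HasDerivAt (elasticE n C)
      (∫ u in (0:ℝ)..(2 * π),
        2 * ⟪Ds n C (Ds n C C) u t, Ds n C (Ds n C (Dt n C)) u t⟫ * ‖Du n C u t‖ -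
          3 * ⟪Ds n C (Dt n C) u t, Ds n C C u t⟫ *
            (‖Ds n C (Ds n C C) u t‖ ^ 2 * ‖Du n C u t‖)) t := by
  have hV := smoothFamily_Du hC
  have hT := smoothFamily_Ds hC himm hC
  have hκ := smoothFamily_Ds hC himm hT
  have hW := smoothFamily_Ds hC himm (smoothFamily_Dt hC)
  have hg := smoothFamily_Ds hC himm hW
  refine intervalIntegral.hasDerivAt_integral_of_continuous_deriv
    (fun t' => ((hκ.continuous_left t').norm.pow 2).mul (hV.continuous_left t').norm) ?_
    (fun t' u => hasDerivAt_elastic_density hC himm u t') t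
  have := hV.continuous
  have := hT.continuous
  have := hκ.continuous
  have := hW.continuous
  have := hg.continuous
  fun_prop

theorem integral_norm_Du_smul_Ds_Dt_eq_zero (hC : SmoothFamily C)
    (hper : ∀ u t, C (u + 2 * π) t = C u t) (himm : ∀ u t, Du n C u t ≠ 0) (t : ℝ) :
    ∫ u in (0:ℝ)..(2 * π), ‖Du n C u t‖ • Ds n C (Dt n C) u t = 0 := by
  simp only [← Du_eq_norm_smul_Ds himm]
  rw [intervalIntegral.integral_eq_sub_of_hasDerivAt
    (fun u _ => hasDerivAt_Du (smoothFamily_Dt hC) u t)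
    (((smoothFamily_Du (smoothFamily_Dt hC)).continuous_left t).intervalIntegrable _ _),
    sub_eq_zero, Dt, Dt]
  congr 1
  funext t'
  simpa using hper 0 t'

theorem norm_Ds_Dt_le (hC : SmoothFamily C) (hper : ∀ u t, C (u + 2 * π) t = C u t)
    (himm : ∀ u t, Du n C u t ≠ 0) (t : ℝ) {u : ℝ} (hu : u ∈ Icc 0 (2 * π)) :
    ‖Ds n C (Dt n C) u t‖ ≤ √(clen n C t) * NN n C t := by
  have hv := (smoothFamily_Du hC).continuous_left t
  have hW := smoothFamily_Ds hC himm (smoothFamily_Dt hC)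
  have hL : 0 < clen n C t :=
    intervalIntegral.intervalIntegral_pos_of_pos_on (hv.norm.intervalIntegrable _ _)
      (fun u _ => norm_pos_iff.2 (himm u t)) two_pi_pos
  calc ‖Ds n C (Dt n C) u t‖ ≤ ∫ w in (0:ℝ)..(2 * π), ‖Du n (Ds n C (Dt n C)) w t‖ :=
        intervalIntegral.norm_le_integral_norm_deriv_of_integral_smul_eq_zero
          (fun w => hasDerivAt_Du hW w t) ((smoothFamily_Du hW).continuous_left t) hv.norm
          (fun _ => norm_nonneg _) hL (integral_norm_Du_smul_Ds_Dt_eq_zero hC hper himm t) hu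
    _ = ∫ w in (0:ℝ)..(2 * π), 1 * ‖Ds n C (Ds n C (Dt n C)) w t‖ * ‖Du n C w t‖ := by
        congr 1
        funext w
        rw [Du_eq_norm_smul_Ds himm, norm_smul, norm_norm]
        ring
    _ ≤ √(∫ w in (0:ℝ)..(2 * π), 1 ^ 2 * ‖Du n C w t‖) * NN n C t :=
        intervalIntegral.integral_mul_mul_le_sqrt_mul_sqrt two_pi_pos.le continuous_const
          ((smoothFamily_Ds hC himm hW).continuous_left t).norm hv.norm (fun _ => norm_nonneg _)
    _ = √(clen n C t) * NN n C t := by simp only [one_pow, one_mul, clen]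

theorem abs_elastic_density_deriv_le (hC : SmoothFamily C)
    (hper : ∀ u t, C (u + 2 * π) t = C u t) (himm : ∀ u t, Du n C u t ≠ 0) (t : ℝ) {u : ℝ}
    (hu : u ∈ Icc 0 (2 * π)) :
    |2 * ⟪Ds n C (Ds n C C) u t, Ds n C (Ds n C (Dt n C)) u t⟫ * ‖Du n C u t‖ -
        3 * ⟪Ds n C (Dt n C) u t, Ds n C C u t⟫ * (‖Ds n C (Ds n C C) u t‖ ^ 2 * ‖Du n C u t‖)| ≤
      2 * (‖Ds n C (Ds n C C) u t‖ * ‖Ds n C (Ds n C (Dt n C)) u t‖ * ‖Du n C u t‖) +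
        3 * (√(clen n C t) * NN n C t) * (‖Ds n C (Ds n C C) u t‖ ^ 2 * ‖Du n C u t‖) := by
  have hφ : |⟪Ds n C (Dt n C) u t, Ds n C C u t⟫| ≤ √(clen n C t) * NN n C t := by
    refine (abs_real_inner_le_norm _ _).trans ?_
    rw [norm_Ds_self himm, mul_one]
    exact norm_Ds_Dt_le hC hper himm t hu
  have h₁ : |2 * ⟪Ds n C (Ds n C C) u t, Ds n C (Ds n C (Dt n C)) u t⟫ * ‖Du n C u t‖| ≤
      2 * (‖Ds n C (Ds n C C) u t‖ * ‖Ds n C (Ds n C (Dt n C)) u t‖ * ‖Du n C u t‖) := by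
    rw [abs_mul, abs_mul, abs_two, abs_norm, mul_assoc]
    gcongr
    exact abs_real_inner_le_norm _ _
  have h₂ : |3 * ⟪Ds n C (Dt n C) u t, Ds n C C u t⟫ *
      (‖Ds n C (Ds n C C) u t‖ ^ 2 * ‖Du n C u t‖)| ≤
      3 * (√(clen n C t) * NN n C t) * (‖Ds n C (Ds n C C) u t‖ ^ 2 * ‖Du n C u t‖) := by
    rw [abs_mul, abs_mul, abs_of_nonneg (by positivity : (0 : ℝ) ≤ 3),
      abs_of_nonneg (by positivity : 0 ≤ ‖Ds n C (Ds n C C) u t‖ ^ 2 * ‖Du n C u t‖)]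
    gcongr
  exact (abs_sub _ _).trans (add_le_add h₁ h₂)

end ClosedCurve

/-- Bound on the time derivative of the elastic energy along a smooth family of
immersed closed curves: `|E'(t)| ≤ 2√(E(t)) N(t) + 3 E(t) √(L(t)) N(t)`. -/
theorem elastic_energy_derivative_bound
    (n : ℕ) (C : ℝ → ℝ → EuclideanSpace ℝ (Fin n))
    (hC : ContDiff ℝ (⊤ : ℕ∞) fun p : ℝ × ℝ => C p.1 p.2)
    (hper : ∀ u t, C (u + 2 * π) t = C u t)
    (himm : ∀ u t, Du n C u t ≠ 0) (t : ℝ) :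
    DifferentiableAt ℝ (elasticE n C) t ∧
      |deriv (elasticE n C) t| ≤
        2 * Real.sqrt (elasticE n C t) * NN n C t +
          3 * elasticE n C t * Real.sqrt (clen n C t) * NN n C t := by
  have hE := hasDerivAt_elasticE hC himm t
  refine ⟨hE.differentiableAt, ?_⟩
  have hv := (smoothFamily_Du hC).continuous_left t
  have hT := (smoothFamily_Ds hC himm hC).continuous_left t
  have hW := (smoothFamily_Ds hC himm (smoothFamily_Dt hC)).continuous_left t
  have hκ := (smoothFamily_Ds hC himm (smoothFamily_Ds hC himm hC)).continuous_left t
  have hg := (smoothFamily_Ds hC himm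
    (smoothFamily_Ds hC himm (smoothFamily_Dt hC))).continuous_left t
  rw [hE.deriv]
  calc _ ≤ ∫ u in (0:ℝ)..(2 * π),
        2 * (‖Ds n C (Ds n C C) u t‖ * ‖Ds n C (Ds n C (Dt n C)) u t‖ * ‖Du n C u t‖) +
          3 * (√(clen n C t) * NN n C t) * (‖Ds n C (Ds n C C) u t‖ ^ 2 * ‖Du n C u t‖) :=
        (intervalIntegral.abs_integral_le_integral_abs two_pi_pos.le).trans <|
          intervalIntegral.integral_mono_on two_pi_pos.le
            ((by fun_prop : Continuous _).intervalIntegrable _ _)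
            ((by fun_prop : Continuous _).intervalIntegrable _ _)
            fun u hu => abs_elastic_density_deriv_le hC hper himm t hu
    _ = 2 * (∫ u in (0:ℝ)..(2 * π),
          ‖Ds n C (Ds n C C) u t‖ * ‖Ds n C (Ds n C (Dt n C)) u t‖ * ‖Du n C u t‖) +
        3 * (√(clen n C t) * NN n C t) * elasticE n C t := by
      rw [intervalIntegral.integral_add ((by fun_prop : Continuous _).intervalIntegrable _ _)
          ((by fun_prop : Continuous _).intervalIntegrable _ _),
        intervalIntegral.integral_const_mul, intervalIntegral.integral_const_mul, elasticE]
    _ ≤ 2 * (√(elasticE n C t) * NN n C t) +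
        3 * (√(clen n C t) * NN n C t) * elasticE n C t := by
      gcongr
      exact intervalIntegral.integral_mul_mul_le_sqrt_mul_sqrt two_pi_pos.le hκ.norm hg.norm
        hv.norm fun _ => norm_nonneg _
    _ = _ := by ring
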